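/- For k = 2, p = 1, f_1 < f_2 and L_1 > L_2 > 0, set λ_T = 1/L_2. Then the minimizers of G(v_1,v_2) = |v_2 - v_1| + λ(L_1|v_1 - f_1| + L_2|v_2 - f_2|) are: for λ < λ_T the unique minimizer is v_1 = v_2 = f_1; for λ > λ_T the unique minimizer is v_1 = f_1, v_2 = f_2; and for λ = λ_T the set of minimizers is exactly {(f_1, t) : t ∈ [f_1, f_2]}. -/

import Mathlib

/-- The two-interval discrete energy with `L^1` fidelity (`p = 1`). -/
noncomputable def G2 (lam L1 L2 f1 f2 : ℝ) (v : ℝ × ℝ) : ℝ :=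
  |v.2 - v.1| + lam * (L1 * |v.1 - f1| + L2 * |v.2 - f2|)

/-!
Write `a = λL₁ > b = λL₂`. The triangle inequality
`|f₂ - f₁| ≤ |v₂ - v₁| + |v₁ - f₁| + |v₂ - f₂|` gives two lower bounds for `G`:
multiplied by `b` it yields `G v ≥ G (f₁, f₁) + (1 - b)|v₂ - v₁| + (a - b)|v₁ - f₁|`,
and as it stands `G v ≥ G (f₁, f₂) + (a - 1)|v₁ - f₁| + (b - 1)|v₂ - f₂|`.
For `b < 1` the first bound has positive coefficients, for `b > 1` the second, and this
pins down the unique minimizer. For `b = 1` the second bound only forces `v₁ = f₁`,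
and then `G (f₁, t) = |t - f₁| + |t - f₂|`, which equals `f₂ - f₁` exactly on `[f₁, f₂]`.
-/

lemma setOf_forall_le_eq_of_forall_le {α : Type*} {F : α → ℝ} {p : α}
    (hp : ∀ v, F p ≤ F v) : {w | ∀ v, F w ≤ F v} = {w | F w ≤ F p} :=
  Set.ext fun _ => ⟨fun hw => hw p, fun hw v => hw.trans (hp v)⟩

lemma eq_zero_and_eq_zero_of_mul_abs_add_mul_abs_nonpos {c d x y : ℝ} (hc : 0 < c)
    (hd : 0 < d) (h : c * |x| + d * |y| ≤ 0) : x = 0 ∧ y = 0 := by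
  have hx := mul_nonneg hc.le (abs_nonneg x)
  have hy := mul_nonneg hd.le (abs_nonneg y)
  exact ⟨abs_nonpos_iff.mp (nonpos_of_mul_nonpos_right (by linarith) hc),
    abs_nonpos_iff.mp (nonpos_of_mul_nonpos_right (by linarith) hd)⟩

lemma abs_sub_add_abs_sub_le_iff {t a b : ℝ} : |t - a| + |t - b| ≤ b - a ↔ t ∈ Set.Icc a b := by
  constructor
  · intro h
    constructor <;> linarith [neg_abs_le (t - a), neg_abs_le (t - b), le_abs_self (t - a),
      le_abs_self (t - b)]
  · rintro ⟨hat, htb⟩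
    rw [abs_of_nonneg (sub_nonneg.mpr hat), abs_of_nonpos (sub_nonpos.mpr htb)]
    linarith

lemma abs_sub_le_abs_add_abs_add_abs (v1 v2 f1 f2 : ℝ) :
    |f2 - f1| ≤ |v2 - v1| + |v1 - f1| + |v2 - f2| := by
  calc |f2 - f1| = |(v2 - v1) + (v1 - f1) - (v2 - f2)| := by ring_nf
    _ ≤ |(v2 - v1) + (v1 - f1)| + |v2 - f2| := abs_sub _ _
    _ ≤ |v2 - v1| + |v1 - f1| + |v2 - f2| := by gcongr; exact abs_add_le _ _

section Energy

variable {lam L1 L2 f1 f2 : ℝ}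

lemma G2_diag_add_le (hb : 0 ≤ lam * L2) (v : ℝ × ℝ) :
    G2 lam L1 L2 f1 f2 (f1, f1) + (1 - lam * L2) * |v.2 - v.1| +
        (lam * L1 - lam * L2) * |v.1 - f1| ≤ G2 lam L1 L2 f1 f2 v := by
  have := mul_le_mul_of_nonneg_left (abs_sub_le_abs_add_abs_add_abs v.1 v.2 f1 f2) hb
  simp only [G2, sub_self, abs_zero, abs_sub_comm f1 f2]
  linarith

lemma G2_data_add_le (v : ℝ × ℝ) :
    G2 lam L1 L2 f1 f2 (f1, f2) + (lam * L1 - 1) * |v.1 - f1| +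
        (lam * L2 - 1) * |v.2 - f2| ≤ G2 lam L1 L2 f1 f2 v := by
  have := abs_sub_le_abs_add_abs_add_abs v.1 v.2 f1 f2
  simp only [G2, sub_self, abs_zero]
  linarith

lemma G2_fst_eq (t : ℝ) : G2 lam L1 L2 f1 f2 (f1, t) = |t - f1| + lam * L2 * |t - f2| := by
  simp only [G2, sub_self, abs_zero]
  ring

lemma G2_minimizers_of_mul_lt_one (hb0 : 0 ≤ lam * L2) (hb1 : lam * L2 < 1)
    (hab : lam * L2 < lam * L1) :
    {w : ℝ × ℝ | ∀ v : ℝ × ℝ, G2 lam L1 L2 f1 f2 w ≤ G2 lam L1 L2 f1 f2 v} = {(f1, f1)} := by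
  have hbound := G2_diag_add_le (L1 := L1) (f1 := f1) (f2 := f2) hb0
  have hmin (v : ℝ × ℝ) : G2 lam L1 L2 f1 f2 (f1, f1) ≤ G2 lam L1 L2 f1 f2 v := by
    have := mul_nonneg (sub_pos.2 hb1).le (abs_nonneg (v.2 - v.1))
    have := mul_nonneg (sub_pos.2 hab).le (abs_nonneg (v.1 - f1))
    linarith [hbound v]
  rw [setOf_forall_le_eq_of_forall_le hmin]
  ext w
  show G2 lam L1 L2 f1 f2 w ≤ G2 lam L1 L2 f1 f2 (f1, f1) ↔ w = (f1, f1)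
  refine ⟨fun hw => ?_, by rintro rfl; exact le_rfl⟩
  obtain ⟨h21, h1⟩ := eq_zero_and_eq_zero_of_mul_abs_add_mul_abs_nonpos
    (x := w.2 - w.1) (y := w.1 - f1) (sub_pos.2 hb1) (sub_pos.2 hab) (by linarith [hbound w])
  rw [sub_eq_zero] at h21 h1
  exact Prod.ext h1 (h21.trans h1)

lemma G2_minimizers_of_one_lt_mul (hb1 : 1 < lam * L2) (hab : lam * L2 < lam * L1) :
    {w : ℝ × ℝ | ∀ v : ℝ × ℝ, G2 lam L1 L2 f1 f2 w ≤ G2 lam L1 L2 f1 f2 v} = {(f1, f2)} := by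
  have hbound := G2_data_add_le (lam := lam) (L1 := L1) (L2 := L2) (f1 := f1) (f2 := f2)
  have ha1 : 0 < lam * L1 - 1 := by linarith
  have hmin (v : ℝ × ℝ) : G2 lam L1 L2 f1 f2 (f1, f2) ≤ G2 lam L1 L2 f1 f2 v := by
    have := mul_nonneg ha1.le (abs_nonneg (v.1 - f1))
    have := mul_nonneg (sub_pos.2 hb1).le (abs_nonneg (v.2 - f2))
    linarith [hbound v]
  rw [setOf_forall_le_eq_of_forall_le hmin]
  ext w
  show G2 lam L1 L2 f1 f2 w ≤ G2 lam L1 L2 f1 f2 (f1, f2) ↔ w = (f1, f2)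
  refine ⟨fun hw => ?_, by rintro rfl; exact le_rfl⟩
  obtain ⟨h1, h2⟩ := eq_zero_and_eq_zero_of_mul_abs_add_mul_abs_nonpos
    (x := w.1 - f1) (y := w.2 - f2) ha1 (sub_pos.2 hb1) (by linarith [hbound w])
  exact Prod.ext (sub_eq_zero.mp h1) (sub_eq_zero.mp h2)

lemma G2_minimizers_of_mul_eq_one (hb1 : lam * L2 = 1) (hab : lam * L2 < lam * L1)
    (hf : f1 ≤ f2) :
    {w : ℝ × ℝ | ∀ v : ℝ × ℝ, G2 lam L1 L2 f1 f2 w ≤ G2 lam L1 L2 f1 f2 v} =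
      {w : ℝ × ℝ | w.1 = f1 ∧ w.2 ∈ Set.Icc f1 f2} := by
  have hbound := G2_data_add_le (lam := lam) (L1 := L1) (L2 := L2) (f1 := f1) (f2 := f2)
  have ha1 : 0 < lam * L1 - 1 := by linarith
  simp only [hb1, sub_self, zero_mul, add_zero] at hbound
  have hmin (v : ℝ × ℝ) : G2 lam L1 L2 f1 f2 (f1, f2) ≤ G2 lam L1 L2 f1 f2 v := by
    have := mul_nonneg ha1.le (abs_nonneg (v.1 - f1))
    linarith [hbound v]
  have hval : G2 lam L1 L2 f1 f2 (f1, f2) = f2 - f1 := by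
    rw [G2_fst_eq, sub_self, abs_zero, mul_zero, add_zero, abs_of_nonneg (sub_nonneg.2 hf)]
  rw [setOf_forall_le_eq_of_forall_le hmin]
  ext ⟨w1, w2⟩
  show G2 lam L1 L2 f1 f2 (w1, w2) ≤ G2 lam L1 L2 f1 f2 (f1, f2) ↔ w1 = f1 ∧ w2 ∈ Set.Icc f1 f2
  constructor
  · intro hw
    have := mul_nonneg ha1.le (abs_nonneg (w1 - f1))
    have h1 : w1 = f1 := sub_eq_zero.mp <| abs_nonpos_iff.mp <|
      nonpos_of_mul_nonpos_right (by linarith [hbound (w1, w2)]) ha1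
    rw [h1, G2_fst_eq, hb1, one_mul, hval] at hw
    exact ⟨h1, abs_sub_add_abs_sub_le_iff.mp hw⟩
  · rintro ⟨rfl, ht⟩
    rw [G2_fst_eq, hb1, one_mul, hval]
    exact abs_sub_add_abs_sub_le_iff.mpr ht

end Energy

/-- for `k = 2`, `p = 1`, `f₁ < f₂` and `L₁ > L₂ > 0`, with
`λ_T = 1/L₂`: below `λ_T` the unique minimizer is `(f₁,f₁)`, above it `(f₁,f₂)`,
and at `λ_T` the minimizers are exactly `{(f₁,t) : t ∈ [f₁,f₂]}`. -/
theorem stmt19 (lam L1 L2 f1 f2 : ℝ) (hlam : 0 < lam)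
    (hL2 : 0 < L2) (hL12 : L2 < L1) (hf : f1 < f2) :
    (lam < 1 / L2 →
      {w : ℝ × ℝ | ∀ v : ℝ × ℝ, G2 lam L1 L2 f1 f2 w ≤ G2 lam L1 L2 f1 f2 v} =
        {(f1, f1)}) ∧
    (lam = 1 / L2 →
      {w : ℝ × ℝ | ∀ v : ℝ × ℝ, G2 lam L1 L2 f1 f2 w ≤ G2 lam L1 L2 f1 f2 v} =
        {w : ℝ × ℝ | w.1 = f1 ∧ w.2 ∈ Set.Icc f1 f2}) ∧
    (1 / L2 < lam →
      {w : ℝ × ℝ | ∀ v : ℝ × ℝ, G2 lam L1 L2 f1 f2 w ≤ G2 lam L1 L2 f1 f2 v} =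
        {(f1, f2)}) := by
  have hab : lam * L2 < lam * L1 := mul_lt_mul_of_pos_left hL12 hlam
  refine ⟨fun h => ?_, fun h => ?_, fun h => ?_⟩
  · exact G2_minimizers_of_mul_lt_one (mul_pos hlam hL2).le ((lt_div_iff₀ hL2).mp h) hab
  · exact G2_minimizers_of_mul_eq_one ((eq_div_iff hL2.ne').mp h) hab hf.le
  · exact G2_minimizers_of_one_lt_mul ((div_lt_iff₀ hL2).mp h) hab
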